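/- Let n ≥ 1, let m and β be real numbers with 0 < m and β > m + 2, and let η be a compactly supported finite Borel measure on ℍ^n = ℝ^{2n} × ℝ for which there exists C > 0 with η(B_ℍ(p,r)) ≤ C r^β for all p ∈ ℍ^n and all r > 0. Then the Euclidean m-energy of the projected measure is finite: ∬ |π(p) − π(q)|^{−m} dη(q) dη(p) < ∞. -/

import Mathlib

open MeasureTheory Module Metric Set
open scoped ENNReal NNReal Real

noncomputable section

/-- Euclidean space `ℝ^{2n}`. -/
abbrev E (n : ℕ) : Type := EuclideanSpace ℝ (Fin (2 * n))

/-- The standard symplectic form `ω((x,y),(u,v)) = x·v − y·u` on `ℝ^{2n}`. -/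
def symp (n : ℕ) (x y : E n) : ℝ :=
  ∑ i : Fin n, (x ⟨i.1, by have := i.2; omega⟩ * y ⟨i.1 + n, by have := i.2; omega⟩ -
    x ⟨i.1 + n, by have := i.2; omega⟩ * y ⟨i.1, by have := i.2; omega⟩)

/-- A linear subspace of `ℝ^{2n}` is isotropic if the symplectic form vanishes on it. -/
def IsIsotropic (n : ℕ) (V : Submodule ℝ (E n)) : Prop :=
  ∀ v ∈ V, ∀ w ∈ V, symp n v w = 0

/-- The orthogonal projection onto a subspace, as a continuous linear endomorphism. -/
def projCLM (n : ℕ) (V : Submodule ℝ (E n)) : E n →L[ℝ] E n :=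
  V.subtypeL.comp (V.orthogonalProjectionOnto)

/-- The isotropic Grassmannian `G_h(2n,m)`, realized as the set of orthogonal projection
operators onto `m`-dimensional isotropic subspaces, inside the continuous linear
endomorphisms of `ℝ^{2n}`.  For `P` in this set, the corresponding plane `V` is
`LinearMap.range P` and the orthogonal projection `P_V` is `P` itself. -/
def grass (n m : ℕ) : Set (E n →L[ℝ] E n) :=
  {P | ∃ V : Submodule ℝ (E n), IsIsotropic n V ∧ finrank ℝ V = m ∧ P = projCLM n V}

/-- Membership in `U(n)`: a linear isometry of `ℝ^{2n}` preserving the symplectic form. -/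
def IsUnitary (n : ℕ) (g : E n ≃ₗᵢ[ℝ] E n) : Prop :=
  ∀ x y, symp n (g x) (g y) = symp n x y

/-- The action of an isometry on projection operators: `P ↦ g ∘ P ∘ g⁻¹`. -/
def conjAct (n : ℕ) (g : E n ≃ₗᵢ[ℝ] E n) (P : E n →L[ℝ] E n) : E n →L[ℝ] E n :=
  (g.toLinearIsometry.toContinuousLinearMap.comp P).comp
    g.symm.toLinearIsometry.toContinuousLinearMap

/-- `ν` is a `U(n)`-invariant Borel probability measure `μ_{2n,m}` on `G_h(2n,m)`:
a Borel measure on the space of operators giving full mass to the isotropic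
Grassmannian and invariant under the conjugation action of the unitary group.
(Probability is imposed via an `IsProbabilityMeasure` instance.) -/
def IsGrassMeasure (n m : ℕ) (ν : Measure (E n →L[ℝ] E n)) : Prop :=
  ν (grass n m) = 1 ∧
    ∀ g : E n ≃ₗᵢ[ℝ] E n, IsUnitary n g → Measure.map (conjAct n g) ν = ν

/-- The Heisenberg group `ℍ^n` as the set `ℝ^{2n} × ℝ`. -/
abbrev Heis (n : ℕ) : Type := E n × ℝ

/-- The Heisenberg group product `(z,t)*(w,s) = (z+w, t+s−½ω(z,w))`. -/
def hmul (n : ℕ) (p q : Heis n) : Heis n :=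
  (p.1 + q.1, p.2 + q.2 - symp n p.1 q.1 / 2)

/-- The Heisenberg group inverse `p⁻¹ = (−z,−t)`. -/
def hinv (n : ℕ) (p : Heis n) : Heis n := (-p.1, -p.2)

/-- The Korányi gauge `‖(z,t)‖_ℍ = (|z|⁴ + 16 t²)^{1/4}`. -/
def kgauge (n : ℕ) (p : Heis n) : ℝ := (‖p.1‖ ^ 4 + 16 * p.2 ^ 2) ^ (1/4 : ℝ)

/-- The closed Korányi ball `B_ℍ(p,r) = {q : ‖p⁻¹ * q‖_ℍ ≤ r}`. -/
def kball (n : ℕ) (p : Heis n) (r : ℝ) : Set (Heis n) :=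
  {q | kgauge n (hmul n (hinv n p) q) ≤ r}

/-!
Fix `p` in the compact support `K`. On `K` the vertical coordinate of `p⁻¹ * q` ranges over a
bounded interval `[-M, M]`; slicing it into pieces of length `r² / 2` covers
`K ∩ π⁻¹(B(π p, r))` by `O(r⁻²)` Korányi balls of radius `2r`. The Frostman bound then gives
`π_#η (B(π p, r)) ≲ r^{β-2}` uniformly in `p`, and since `β - 2 > m`, a dyadic decomposition of
`|π p - w|^{-m}` bounds the inner integral of the energy uniformly in `p`.
-/

section DyadicEnergy

variable {X : Type*} [PseudoMetricSpace X]

theorem edist_rpow_neg_le_one_add_tsum_indicator {m : ℝ} (hm : 0 ≤ m) (x y : X) :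
    edist x y ^ (-m) ≤
      1 + ∑' k : ℕ, (closedBall x ((1 / 2 : ℝ) ^ k)).indicator
        (fun _ => ENNReal.ofReal (((2 : ℝ) ^ m) ^ (k + 1))) y := by
  have hw : ∀ k : ℕ, 1 ≤ ((2 : ℝ) ^ m) ^ (k + 1) :=
    fun k => one_le_pow₀ (Real.one_le_rpow (by norm_num) hm)
  rcases (dist_nonneg : 0 ≤ dist x y).eq_or_lt with hd | hd
  · -- at `y = x` both sides are `∞`
    have hmem : ∀ k : ℕ, y ∈ closedBall x ((1 / 2 : ℝ) ^ k) := fun k => by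
      rw [mem_closedBall, dist_comm, ← hd]; positivity
    have htop : ∑' k : ℕ, (closedBall x ((1 / 2 : ℝ) ^ k)).indicator
        (fun _ => ENNReal.ofReal (((2 : ℝ) ^ m) ^ (k + 1))) y = ∞ := by
      refine top_le_iff.1 ?_
      calc ∞ = ∑' _ : ℕ, (1 : ℝ≥0∞) := (ENNReal.tsum_const_eq_top_of_ne_zero one_ne_zero).symm
        _ ≤ _ := ENNReal.tsum_le_tsum fun k => by
          rw [indicator_of_mem (hmem k)]; exact ENNReal.one_le_ofReal.2 (hw k)
    rw [htop, add_top]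
    exact le_top
  rw [edist_dist, ENNReal.ofReal_rpow_of_pos hd]
  rcases le_or_gt (dist x y) 1 with hd₁ | hd₁
  · obtain ⟨k, hlt, hle⟩ :=
      exists_nat_pow_near_of_lt_one hd hd₁ (by norm_num : (0 : ℝ) < 1 / 2) (by norm_num)
    have hy : y ∈ closedBall x ((1 / 2 : ℝ) ^ k) := by rwa [mem_closedBall, dist_comm]
    calc ENNReal.ofReal (dist x y ^ (-m)) ≤ ENNReal.ofReal (((2 : ℝ) ^ m) ^ (k + 1)) := by
          refine ENNReal.ofReal_le_ofReal ?_
          calc dist x y ^ (-m) ≤ ((1 / 2 : ℝ) ^ (k + 1)) ^ (-m) :=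
                Real.rpow_le_rpow_of_nonpos (by positivity) hlt.le (neg_nonpos.2 hm)
            _ = ((2 : ℝ) ^ m) ^ (k + 1) := by
                rw [← Real.rpow_pow_comm (by norm_num), one_div, Real.inv_rpow (by norm_num),
                  Real.rpow_neg (by norm_num), inv_inv]
      _ = _ := (indicator_of_mem hy (fun _ => _)).symm
      _ ≤ _ := ENNReal.le_tsum k
      _ ≤ _ := le_add_self
  · exact le_add_right
      (ENNReal.ofReal_le_one.2 (Real.rpow_le_one_of_one_le_of_nonpos hd₁.le (by linarith)))

variable [MeasurableSpace X] [OpensMeasurableSpace X]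

theorem lintegral_edist_rpow_neg_le (μ : Measure X) (x : X) {m s A : ℝ} (hm : 0 ≤ m)
    (hms : m < s) (hA : 0 ≤ A)
    (hμ : ∀ r, 0 < r → r ≤ 1 → μ (closedBall x r) ≤ ENNReal.ofReal (A * r ^ s)) :
    ∫⁻ y, edist x y ^ (-m) ∂μ ≤ μ univ + ENNReal.ofReal (A * 2 ^ m / (1 - 2 ^ (m - s))) := by
  have hq₀ : 0 ≤ (2 : ℝ) ^ (m - s) := by positivity
  have hq₁ : (2 : ℝ) ^ (m - s) < 1 :=
    Real.rpow_lt_one_of_one_lt_of_neg (by norm_num) (by linarith)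
  have hterm (k : ℕ) :
      ENNReal.ofReal (((2 : ℝ) ^ m) ^ (k + 1)) * μ (closedBall x ((1 / 2) ^ k)) ≤
        ENNReal.ofReal (A * 2 ^ m * ((2 : ℝ) ^ (m - s)) ^ k) := by
    calc _ ≤ ENNReal.ofReal (((2 : ℝ) ^ m) ^ (k + 1)) *
            ENNReal.ofReal (A * ((1 / 2) ^ k) ^ s) :=
          mul_le_mul_right (hμ _ (by positivity) (pow_le_one₀ (by norm_num) (by norm_num))) _
      _ = _ := by
          rw [← ENNReal.ofReal_mul (by positivity), ← Real.rpow_pow_comm (by norm_num),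
            Real.div_rpow zero_le_one zero_le_two, Real.one_rpow, Real.rpow_sub two_pos,
            div_pow, div_pow, one_pow]
          ring_nf
  calc ∫⁻ y, edist x y ^ (-m) ∂μ
      ≤ ∫⁻ y, 1 + ∑' k : ℕ, (closedBall x ((1 / 2 : ℝ) ^ k)).indicator
          (fun _ => ENNReal.ofReal (((2 : ℝ) ^ m) ^ (k + 1))) y ∂μ :=
        lintegral_mono fun y => edist_rpow_neg_le_one_add_tsum_indicator hm x y
    _ = μ univ + ∑' k : ℕ,
          ENNReal.ofReal (((2 : ℝ) ^ m) ^ (k + 1)) * μ (closedBall x ((1 / 2) ^ k)) := by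
        rw [lintegral_add_left measurable_const, lintegral_const, one_mul,
          lintegral_tsum fun k =>
            (measurable_const.indicator measurableSet_closedBall).aemeasurable]
        simp_rw [lintegral_indicator_const measurableSet_closedBall]
    _ ≤ μ univ + ∑' k : ℕ, ENNReal.ofReal (A * 2 ^ m * ((2 : ℝ) ^ (m - s)) ^ k) := by
        gcongr with k
        exact hterm k
    _ = μ univ + ENNReal.ofReal (A * 2 ^ m / (1 - 2 ^ (m - s))) := by
        rw [← ENNReal.ofReal_tsum_of_nonneg (fun k => by positivity)
            ((summable_geometric_of_lt_one hq₀ hq₁).mul_left _),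
          tsum_mul_left, tsum_geometric_of_lt_one hq₀ hq₁, div_eq_mul_inv]

end DyadicEnergy

theorem exists_abs_sub_nat_mul_le {a L h : ℝ} (ha : 0 ≤ a) (haL : a ≤ L) (hh : 0 < h) :
    ∃ k < ⌊L / h⌋₊ + 1, |a - k * h| ≤ h := by
  refine ⟨⌊a / h⌋₊,
    Nat.lt_succ_of_le (Nat.floor_le_floor (div_le_div_of_nonneg_right haL hh.le)), ?_⟩
  have hlo := Nat.floor_le (div_nonneg ha hh.le)
  have hhi := Nat.lt_floor_add_one (a / h)
  rw [le_div_iff₀ hh] at hlo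
  rw [div_lt_iff₀ hh] at hhi
  rw [abs_le]
  constructor <;> linarith

section Heisenberg

variable {n : ℕ}

theorem continuous_hmul_hinv_snd :
    Continuous fun x : Heis n × Heis n => (hmul n (hinv n x.1) x.2).2 := by
  unfold hmul hinv symp
  fun_prop

theorem hmul_hinv_fst (p q : Heis n) : (hmul n (hinv n p) q).1 = q.1 - p.1 := by
  simp [hmul, hinv, neg_add_eq_sub]

theorem hmul_hinv_vadd_snd (p q : Heis n) (t : ℝ) :
    (hmul n (hinv n (p.1, p.2 + t)) q).2 = (hmul n (hinv n p) q).2 - t := by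
  simp only [hmul, hinv]
  ring

theorem kgauge_le_two_mul {p : Heis n} {r : ℝ} (hr : 0 ≤ r) (h₁ : ‖p.1‖ ≤ r)
    (h₂ : |p.2| ≤ r ^ 2 / 2) : kgauge n p ≤ 2 * r := by
  have h₁' : ‖p.1‖ ^ 4 ≤ r ^ 4 := pow_le_pow_left₀ (norm_nonneg _) h₁ 4
  have h₂' : p.2 ^ 2 ≤ (r ^ 2 / 2) ^ 2 := sq_le_sq' (abs_le.1 h₂).1 (abs_le.1 h₂).2
  calc kgauge n p ≤ ((2 * r) ^ 4) ^ (1 / 4 : ℝ) :=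
        Real.rpow_le_rpow (by positivity) (by nlinarith [pow_nonneg hr 4]) (by norm_num)
    _ = 2 * r := by
        rw [← Real.rpow_natCast, ← Real.rpow_mul (by positivity)]
        norm_num

theorem tube_subset_biUnion_kball (p : Heis n) {r M : ℝ} (hr : 0 < r) :
    {q : Heis n | ‖q.1 - p.1‖ ≤ r ∧ |(hmul n (hinv n p) q).2| ≤ M} ⊆
      ⋃ k ∈ Finset.range (⌊2 * M / (r ^ 2 / 2)⌋₊ + 1),
        kball n (p.1, p.2 + (k * (r ^ 2 / 2) - M)) (2 * r) := by
  rintro q ⟨hq₁, hq₂⟩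
  obtain ⟨k, hk, hk'⟩ := exists_abs_sub_nat_mul_le (a := (hmul n (hinv n p) q).2 + M)
    (L := 2 * M) (h := r ^ 2 / 2)
    (by linarith [(abs_le.1 hq₂).1]) (by linarith [(abs_le.1 hq₂).2]) (by positivity)
  refine mem_biUnion (Finset.mem_range.2 hk) (kgauge_le_two_mul hr.le ?_ ?_)
  · rwa [hmul_hinv_fst]
  · rw [hmul_hinv_vadd_snd]
    convert hk' using 2
    ring

variable (η : Measure (Heis n)) {β C : ℝ}

theorem measure_tube_le (hC : 0 ≤ C)
    (hfrost : ∀ (p : Heis n) (r : ℝ), 0 < r → η (kball n p r) ≤ ENNReal.ofReal (C * r ^ β))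
    (p : Heis n) {r M : ℝ} (hr : 0 < r) (hr₁ : r ≤ 1) (hM : 0 ≤ M) :
    η {q : Heis n | ‖q.1 - p.1‖ ≤ r ∧ |(hmul n (hinv n p) q).2| ≤ M} ≤
      ENNReal.ofReal ((4 * M + 1) * 2 ^ β * C * r ^ (β - 2)) := by
  set N := ⌊2 * M / (r ^ 2 / 2)⌋₊ + 1
  have hN : (N : ℝ) * r ^ 2 ≤ 4 * M + 1 := by
    have hfloor := Nat.floor_le (a := 2 * M / (r ^ 2 / 2)) (by positivity)
    have hr₂ : r ^ 2 ≤ 1 := pow_le_one₀ hr.le hr₁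
    have : 2 * M / (r ^ 2 / 2) * r ^ 2 = 4 * M := by field_simp; ring
    push_cast [N]
    nlinarith
  calc _ ≤ η (⋃ k ∈ Finset.range N, kball n (p.1, p.2 + (k * (r ^ 2 / 2) - M)) (2 * r)) :=
        measure_mono (tube_subset_biUnion_kball p hr)
    _ ≤ ∑ k ∈ Finset.range N, η (kball n (p.1, p.2 + (k * (r ^ 2 / 2) - M)) (2 * r)) :=
        measure_biUnion_finset_le _ _
    _ ≤ ∑ _k ∈ Finset.range N, ENNReal.ofReal (C * (2 * r) ^ β) :=
        Finset.sum_le_sum fun k _ => hfrost _ _ (by positivity)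
    _ = ENNReal.ofReal (N * (C * (2 * r) ^ β)) := by
        rw [Finset.sum_const, Finset.card_range, nsmul_eq_mul,
          ENNReal.ofReal_mul (Nat.cast_nonneg _), ENNReal.ofReal_natCast]
    _ ≤ _ := by
        refine ENNReal.ofReal_le_ofReal ?_
        rw [Real.mul_rpow zero_le_two hr.le, Real.rpow_sub hr, Real.rpow_two]
        calc (N : ℝ) * (C * (2 ^ β * r ^ β)) = (N * r ^ 2) * 2 ^ β * C * (r ^ β / r ^ 2) := by
              field_simp
          _ ≤ _ := by gcongr

theorem measure_preimage_fst_closedBall_le (hC : 0 ≤ C)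
    (hfrost : ∀ (p : Heis n) (r : ℝ), 0 < r → η (kball n p r) ≤ ENNReal.ofReal (C * r ^ β))
    {K : Set (Heis n)} (hK : η Kᶜ = 0) {p : Heis n} {M : ℝ} (hM : 0 ≤ M)
    (hKM : ∀ q ∈ K, |(hmul n (hinv n p) q).2| ≤ M) {r : ℝ} (hr : 0 < r) (hr₁ : r ≤ 1) :
    η (Prod.fst ⁻¹' closedBall p.1 r) ≤
      ENNReal.ofReal ((4 * M + 1) * 2 ^ β * C * r ^ (β - 2)) := by
  set tube := {q : Heis n | ‖q.1 - p.1‖ ≤ r ∧ |(hmul n (hinv n p) q).2| ≤ M}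
  calc _ ≤ η (Kᶜ ∪ tube) := by
        refine measure_mono fun q hq => ?_
        by_cases hqK : q ∈ K
        · exact Or.inr ⟨by rwa [← dist_eq_norm], hKM q hqK⟩
        · exact Or.inl hqK
    _ ≤ η Kᶜ + η tube := measure_union_le _ _
    _ ≤ _ := by
        rw [hK, zero_add]
        exact measure_tube_le η hC hfrost p hr hr₁ hM

end Heisenberg

theorem stmt15_general (n : ℕ) (m β C : ℝ) (hm : 0 < m) (hβ : m + 2 < β) (hC : 0 < C)
    (η : Measure (Heis n)) [IsFiniteMeasure η]
    (hηc : ∃ K : Set (Heis n), IsCompact K ∧ η Kᶜ = 0)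
    (hfrost : ∀ (p : Heis n) (r : ℝ), 0 < r → η (kball n p r) ≤ ENNReal.ofReal (C * r ^ β)) :
    ∫⁻ p, ∫⁻ q, edist p.1 q.1 ^ (-m) ∂η ∂η < ∞ := by
  obtain ⟨K, hK, hK0⟩ := hηc
  obtain ⟨M, hM0, hM⟩ :
      ∃ M : ℝ, 0 ≤ M ∧ ∀ p ∈ K, ∀ q ∈ K, |(hmul n (hinv n p) q).2| ≤ M := by
    obtain ⟨M, hM⟩ :=
      (hK.prod hK).exists_bound_of_continuousOn continuous_hmul_hinv_snd.continuousOn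
    exact ⟨max M 0, le_max_right _ _,
      fun p hp q hq => (hM (p, q) ⟨hp, hq⟩).trans (le_max_left _ _)⟩
  obtain ⟨B, hB, hinner⟩ : ∃ B < ∞, ∀ p ∈ K, ∫⁻ q, edist p.1 q.1 ^ (-m) ∂η ≤ B := by
    refine ⟨η univ + ENNReal.ofReal
        ((4 * M + 1) * 2 ^ β * C * 2 ^ m / (1 - 2 ^ (m - (β - 2)))),
      ENNReal.add_lt_top.2 ⟨measure_lt_top _ _, ENNReal.ofReal_lt_top⟩, fun p hp => ?_⟩
    rw [← lintegral_map (f := fun y => edist p.1 y ^ (-m)) (by fun_prop) measurable_fst,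
      ← preimage_univ, ← Measure.map_apply measurable_fst MeasurableSet.univ]
    refine lintegral_edist_rpow_neg_le _ _ hm.le (by linarith) (by positivity) fun r hr hr₁ => ?_
    rw [Measure.map_apply measurable_fst measurableSet_closedBall]
    exact measure_preimage_fst_closedBall_le η hC.le hfrost hK0 hM0 (hM p hp) hr hr₁
  calc ∫⁻ p, ∫⁻ q, edist p.1 q.1 ^ (-m) ∂η ∂η ≤ ∫⁻ _, B ∂η :=
        lintegral_mono_ae ((ae_iff.2 hK0 : ∀ᵐ p ∂η, p ∈ K).mono hinner)
    _ < ∞ := by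
        rw [lintegral_const]
        exact ENNReal.mul_lt_top hB (measure_lt_top _ _)

/-- If `η` is a compactly supported finite Borel measure on `ℍ^n` with
`η(B_ℍ(p,r)) ≤ C r^β` for some `β > m + 2 > 2`, then the Euclidean `m`-energy of the
projected measure `π_#η` is finite: `∬ |π(p) − π(q)|^{−m} dη(q) dη(p) < ∞`. -/
theorem stmt15 (n : ℕ) (hn : 1 ≤ n) (m β C : ℝ) (hm : 0 < m) (hβ : m + 2 < β) (hC : 0 < C)
    (η : Measure (Heis n)) [IsFiniteMeasure η]
    (hηc : ∃ K : Set (Heis n), IsCompact K ∧ η Kᶜ = 0)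
    (hfrost : ∀ (p : Heis n) (r : ℝ), 0 < r → η (kball n p r) ≤ ENNReal.ofReal (C * r ^ β)) :
    ∫⁻ p, ∫⁻ q, edist p.1 q.1 ^ (-m) ∂η ∂η < ∞ :=
  stmt15_general n m β C hm hβ hC η hηc hfrost
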